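/- Let $\phi : S^1 \to \mathbb{R}$ be a $C^2$ function with $\phi > 0$, and let $v : S^1 \to \mathbb{R}$ be $C^2$ with $v > 0$. Then $\int_{S^1} \frac{(v\phi)''}{2(v\phi)}\,\phi^2\,d\zeta = -\frac12\int_{S^1} |\phi'|^2\,d\zeta + \frac12 \int_{S^1} \frac{\phi^2 (v')^2}{v^2}\,d\zeta$, and in particular $\int_{S^1} \frac{(v\phi)''}{2(v\phi)}\,\phi^2\,d\zeta \ge -\frac12\int_{S^1}|\phi'|^2\,d\zeta$. -/

import Mathlib

open Real intervalIntegral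

/-! With `w = v' / v` one has pointwise
`(vφ)'' φ² / (vφ) = (w φ² + φ φ')' + w² φ² - (φ')²`,
and the derivative of the periodic function `w φ² + φ φ'` integrates to zero over a period. -/

theorem Function.Periodic.deriv {f : ℝ → ℝ} {c : ℝ} (h : Function.Periodic f c) :
    Function.Periodic (_root_.deriv f) c := fun x => by
  rw [← deriv_comp_add_const]
  exact congrArg (_root_.deriv · x) (funext h)

theorem Function.Periodic.integral_deriv_eq_zero {f : ℝ → ℝ} {T : ℝ}
    (hper : Function.Periodic f T) (hf : ContDiff ℝ 1 f) (a : ℝ) :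
    ∫ x in a..a + T, _root_.deriv f x = 0 := by
  rw [integral_deriv_eq_sub' f rfl (fun x _ => hf.differentiable one_ne_zero x)
    (hf.continuous_deriv le_rfl).continuousOn, hper a, sub_self]

theorem deriv_deriv_mul {f g : ℝ → ℝ} (hf : Differentiable ℝ f) (hg : Differentiable ℝ g)
    (hf' : Differentiable ℝ (deriv f)) (hg' : Differentiable ℝ (deriv g)) (x : ℝ) :
    deriv (deriv (fun y => f y * g y)) x
      = deriv (deriv f) x * g x + 2 * (deriv f x * deriv g x) + f x * deriv (deriv g) x := by
  have hfg : deriv (fun y => f y * g y) = fun y => deriv f y * g y + f y * deriv g y :=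
    funext fun y => deriv_mul (hf y) (hg y)
  have h : HasDerivAt (fun y => deriv f y * g y + f y * deriv g y)
      (deriv (deriv f) x * g x + deriv f x * deriv g x
        + (deriv f x * deriv g x + f x * deriv (deriv g) x)) x :=
    ((hf' x).hasDerivAt.mul (hg x).hasDerivAt).add ((hf x).hasDerivAt.mul (hg' x).hasDerivAt)
  rw [hfg, h.deriv]
  ring

noncomputable def ibpBoundaryTerm (v φ : ℝ → ℝ) : ℝ → ℝ :=
  fun x => deriv v x / v x * φ x ^ 2 + φ x * deriv φ x

theorem deriv_ibpBoundaryTerm {v φ : ℝ → ℝ} {x : ℝ} (hv : Differentiable ℝ v)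
    (hφ : Differentiable ℝ φ) (hv' : Differentiable ℝ (deriv v))
    (hφ' : Differentiable ℝ (deriv φ)) (hvx : v x ≠ 0) :
    deriv (ibpBoundaryTerm v φ) x
      = (deriv (deriv v) x * v x - deriv v x ^ 2) / v x ^ 2 * φ x ^ 2
        + 2 * (deriv v x / v x) * φ x * deriv φ x + (deriv φ x ^ 2 + φ x * deriv (deriv φ) x) := by
  have h : HasDerivAt (ibpBoundaryTerm v φ)
      ((deriv (deriv v) x * v x - deriv v x * deriv v x) / v x ^ 2 * φ x ^ 2
        + deriv v x / v x * (((2 : ℕ) : ℝ) * φ x ^ (2 - 1) * deriv φ x)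
        + (deriv φ x * deriv φ x + φ x * deriv (deriv φ) x)) x :=
    (((hv' x).hasDerivAt.div (hv x).hasDerivAt hvx).mul ((hφ x).hasDerivAt.pow 2)).add
      ((hφ x).hasDerivAt.mul (hφ' x).hasDerivAt)
  rw [h.deriv]
  ring

theorem ContDiff.ibpBoundaryTerm {v φ : ℝ → ℝ} (hv : ContDiff ℝ 2 v) (hφ : ContDiff ℝ 2 φ)
    (hv0 : ∀ x, v x ≠ 0) : ContDiff ℝ 1 (ibpBoundaryTerm v φ) := by
  have hv' : ContDiff ℝ 1 (deriv v) := hv.deriv'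
  have hφ' : ContDiff ℝ 1 (deriv φ) := hφ.deriv'
  exact ((hv'.div (hv.of_le one_le_two) hv0).mul ((hφ.of_le one_le_two).pow 2)).add
    ((hφ.of_le one_le_two).mul hφ')

theorem Function.Periodic.ibpBoundaryTerm {v φ : ℝ → ℝ} {c : ℝ} (hv : Function.Periodic v c)
    (hφ : Function.Periodic φ c) : Function.Periodic (_root_.ibpBoundaryTerm v φ) c := fun x => by
  simp only [_root_.ibpBoundaryTerm, hv x, hφ x, hv.deriv x, hφ.deriv x]

theorem deriv_deriv_mul_div_mul_mul_sq {v φ : ℝ → ℝ} {x : ℝ} (hv : Differentiable ℝ v)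
    (hφ : Differentiable ℝ φ) (hv' : Differentiable ℝ (deriv v))
    (hφ' : Differentiable ℝ (deriv φ)) (hvx : v x ≠ 0) :
    deriv (deriv (fun y => v y * φ y)) x / (2 * (v x * φ x)) * φ x ^ 2
      = 1 / 2 * deriv (ibpBoundaryTerm v φ) x
        + (1 / 2 * (φ x ^ 2 * deriv v x ^ 2 / v x ^ 2) - 1 / 2 * deriv φ x ^ 2) := by
  rw [deriv_deriv_mul hv hφ hv' hφ', deriv_ibpBoundaryTerm hv hφ hv' hφ' hvx]
  field_simp
  ring

theorem circle_ibp_identity_general (φ v : ℝ → ℝ)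
    (hφper : Function.Periodic φ (2 * Real.pi)) (hvper : Function.Periodic v (2 * Real.pi))
    (hφ : ContDiff ℝ 2 φ) (hv : ContDiff ℝ 2 v)
    (hvpos : ∀ x, 0 < v x) :
    (∫ x in (0:ℝ)..(2 * Real.pi),
        deriv (deriv (fun y => v y * φ y)) x / (2 * (v x * φ x)) * (φ x) ^ 2)
      = -(1 / 2) * (∫ x in (0:ℝ)..(2 * Real.pi), (deriv φ x) ^ 2)
        + (1 / 2) * (∫ x in (0:ℝ)..(2 * Real.pi), (φ x) ^ 2 * (deriv v x) ^ 2 / (v x) ^ 2) ∧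
    -(1 / 2) * (∫ x in (0:ℝ)..(2 * Real.pi), (deriv φ x) ^ 2) ≤
      ∫ x in (0:ℝ)..(2 * Real.pi),
        deriv (deriv (fun y => v y * φ y)) x / (2 * (v x * φ x)) * (φ x) ^ 2 := by
  have hv0 : ∀ x, v x ≠ 0 := fun x => (hvpos x).ne'
  have hF := hv.ibpBoundaryTerm hφ hv0
  have hF_int : ∫ x in (0:ℝ)..(2 * π), deriv (ibpBoundaryTerm v φ) x = 0 := by
    simpa using (hvper.ibpBoundaryTerm hφper).integral_deriv_eq_zero hF 0
  have hφ' : ContDiff ℝ 1 (deriv φ) := hφ.deriv'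
  have hv' : ContDiff ℝ 1 (deriv v) := hv.deriv'
  have hint_v :
      IntervalIntegrable (fun x => φ x ^ 2 * deriv v x ^ 2 / v x ^ 2) MeasureTheory.volume 0 (2 * π) :=
    (((hφ.continuous.pow 2).mul (hv'.continuous.pow 2)).div (hv.continuous.pow 2)
      fun x => pow_ne_zero 2 (hv0 x)).intervalIntegrable _ _
  have hint_φ : IntervalIntegrable (fun x => deriv φ x ^ 2) MeasureTheory.volume 0 (2 * π) :=
    (hφ'.continuous.pow 2).intervalIntegrable _ _
  have hidentity : (∫ x in (0:ℝ)..(2 * π),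
        deriv (deriv (fun y => v y * φ y)) x / (2 * (v x * φ x)) * (φ x) ^ 2)
      = -(1 / 2) * (∫ x in (0:ℝ)..(2 * π), (deriv φ x) ^ 2)
        + (1 / 2) * (∫ x in (0:ℝ)..(2 * π), (φ x) ^ 2 * (deriv v x) ^ 2 / (v x) ^ 2) := by
    rw [integral_congr fun x _ => deriv_deriv_mul_div_mul_mul_sq (hv.differentiable two_ne_zero)
        (hφ.differentiable two_ne_zero) (hv'.differentiable one_ne_zero)
        (hφ'.differentiable one_ne_zero) (hv0 x),
      integral_add (((hF.continuous_deriv le_rfl).const_mul _).intervalIntegrable _ _)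
        ((hint_v.const_mul _).sub (hint_φ.const_mul _)),
      integral_sub (hint_v.const_mul _) (hint_φ.const_mul _),
      integral_const_mul, integral_const_mul, integral_const_mul, hF_int]
    ring
  refine ⟨hidentity, ?_⟩
  have hnonneg : 0 ≤ ∫ x in (0:ℝ)..(2 * π), φ x ^ 2 * deriv v x ^ 2 / v x ^ 2 :=
    integral_nonneg two_pi_pos.le fun x _ => by positivity
  linarith

/-- Integration by parts identity on the circle (identified with `ℝ/2πℤ`):
for positive `C²` functions `φ, v`,
`∫ (vφ)''/(2vφ) · φ² = -½∫ (φ')² + ½∫ φ²(v')²/v²`, and in particular the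
left-hand side is at least `-½∫ (φ')²`. -/
theorem circle_ibp_identity (φ v : ℝ → ℝ)
    (hφper : Function.Periodic φ (2 * Real.pi)) (hvper : Function.Periodic v (2 * Real.pi))
    (hφ : ContDiff ℝ 2 φ) (hv : ContDiff ℝ 2 v)
    (hφpos : ∀ x, 0 < φ x) (hvpos : ∀ x, 0 < v x) :
    (∫ x in (0:ℝ)..(2 * Real.pi),
        deriv (deriv (fun y => v y * φ y)) x / (2 * (v x * φ x)) * (φ x) ^ 2)
      = -(1 / 2) * (∫ x in (0:ℝ)..(2 * Real.pi), (deriv φ x) ^ 2)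
        + (1 / 2) * (∫ x in (0:ℝ)..(2 * Real.pi), (φ x) ^ 2 * (deriv v x) ^ 2 / (v x) ^ 2) ∧
    -(1 / 2) * (∫ x in (0:ℝ)..(2 * Real.pi), (deriv φ x) ^ 2) ≤
      ∫ x in (0:ℝ)..(2 * Real.pi),
        deriv (deriv (fun y => v y * φ y)) x / (2 * (v x * φ x)) * (φ x) ^ 2 :=
  circle_ibp_identity_general φ v hφper hvper hφ hv hvpos
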